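/- arXiv:2208.08784 — 2 statements merged into one kernel-verified Lean document; each statement's English description precedes it below -/
import Mathlib

section
/- Let X and X^n be stochastic processes with sample paths in D_ℝ[0,1], and suppose each X^n is constant on the dyadic intervals [i/2^n, (i+1)/2^n) for i = 0, ..., 2^n − 1. If max_{d ∈ D_n} |X^n_d − X_d| → 0 almost surely as n → ∞, where D_n = {0, 1/2^n, ..., (2^n−1)/2^n, 1}, then X^n → X almost surely in Skorokhod's J1 topology on D_ℝ[0,1]. -/
open MeasureTheory Set Filter Topology

/-- Càdlàg on `[0,1]`: right-continuous on `[0,1)` with left limits on `(0,1]`. -/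
def CadlagOn01 (f : ℝ → ℝ) : Prop :=
  (∀ t ∈ Ico (0 : ℝ) 1, Tendsto f (nhdsWithin t (Ici t)) (nhds (f t))) ∧
  (∀ t ∈ Ioc (0 : ℝ) 1, ∃ c : ℝ, Tendsto f (nhdsWithin t (Iio t)) (nhds c))

/-- The family `Λ` of time changes: increasing homeomorphisms of `[0,1]` onto itself. -/
def timeChanges : Set (ℝ → ℝ) :=
  {l | l 0 = 0 ∧ l 1 = 1 ∧ StrictMonoOn l (Icc 0 1) ∧ ContinuousOn l (Icc 0 1) ∧
    MapsTo l (Icc (0 : ℝ) 1) (Icc (0 : ℝ) 1) ∧ SurjOn l (Icc (0 : ℝ) 1) (Icc (0 : ℝ) 1)}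

/-- Skorokhod's J1 distance on `D_ℝ[0,1]`:
`d_{J1}(x,y) = inf_{λ ∈ Λ} (sup_t |λ(t) − t| + sup_t |x(λ(t)) − y(t)|)`. -/
noncomputable def J1dist (x y : ℝ → ℝ) : ℝ :=
  sInf ((fun l => (⨆ t : Icc (0 : ℝ) 1, |l t - (t : ℝ)|) +
      ⨆ t : Icc (0 : ℝ) 1, |x (l t) - y t|) '' timeChanges)



lemma chain_mono {k : ℕ} {a : ℕ → ℝ} (h : ∀ j < k, a j < a (j+1)) :
    ∀ i j, i ≤ j → j ≤ k → a i ≤ a j := by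
  intro i j hij
  induction hij with
  | refl => intro _; exact le_rfl
  | @step m h' ih =>
    intro hm
    exact (ih (Nat.le_of_succ_le hm)).trans (h m (Nat.lt_of_succ_le hm)).le

lemma chain_strict {k : ℕ} {a : ℕ → ℝ} (h : ∀ j < k, a j < a (j+1)) :
    ∀ i j, i < j → j ≤ k → a i < a j := by
  intro i j hij hjk
  exact lt_of_lt_of_le (h i (lt_of_lt_of_le hij hjk))
    (chain_mono h (i+1) j hij hjk)

lemma min_sub_min_eq {c d t : ℝ} (hdc : d ≤ c) : min t c - min t d = min (max t d) c - d := by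
  rcases le_total t d with h | h
  · rw [min_eq_left (h.trans hdc), min_eq_left h, max_eq_right h, min_eq_left hdc]; ring
  · rw [min_eq_right h, max_eq_left h]

noncomputable def plin (k : ℕ) (a b : ℕ → ℝ) (t : ℝ) : ℝ :=
  ∑ j ∈ Finset.range k, (b (j+1) - b j) / (a (j+1) - a j) * (min t (a (j+1)) - min t (a j))

section plin
variable {k : ℕ} {a b : ℕ → ℝ}
variable (ha0 : a 0 = 0) (hak : a k = 1) (hb0 : b 0 = 0) (hbk : b k = 1)
variable (haS : ∀ j < k, a j < a (j+1)) (hbS : ∀ j < k, b j < b (j+1))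

include haS in
lemma plin_node (i : ℕ) (hik : i ≤ k) : plin k a b (a i) = b i - b 0 := by
  have step : ∀ j ∈ Finset.range k,
      (b (j+1) - b j) / (a (j+1) - a j) * (min (a i) (a (j+1)) - min (a i) (a j))
      = if j < i then b (j+1) - b j else 0 := by
    intro j hj
    rw [Finset.mem_range] at hj
    by_cases h : j < i
    · have h1 : a (j+1) ≤ a i := chain_mono haS (j+1) i h hik
      have h2 : a j ≤ a i := (haS j hj).le.trans h1
      rw [min_eq_right h1, min_eq_right h2, if_pos h,
        div_mul_cancel₀ _ (sub_ne_zero.mpr (haS j hj).ne')]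
    · have h1 : a i ≤ a j := chain_mono haS i j (Nat.le_of_not_lt h) hj.le
      have h2 : a i ≤ a (j+1) := h1.trans (haS j hj).le
      rw [min_eq_left h1, min_eq_left h2, if_neg h]
      ring
  rw [plin, Finset.sum_congr rfl step]
  rw [← Finset.sum_subset (Finset.range_subset_range.mpr hik)
    (by intro x hx hxi; rw [if_neg]; simpa using hxi)]
  rw [Finset.sum_congr rfl (fun j hj => if_pos (Finset.mem_range.mp hj)),
    Finset.sum_range_sub (fun j => b j)]

include haS hbS in
lemma plin_mono : Monotone (plin k a b) := by
  intro x y hxy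
  apply Finset.sum_le_sum
  intro j hj
  rw [Finset.mem_range] at hj
  have hs : 0 ≤ (b (j+1) - b j) / (a (j+1) - a j) :=
    le_of_lt (div_pos (sub_pos.mpr (hbS j hj)) (sub_pos.mpr (haS j hj)))
  apply mul_le_mul_of_nonneg_left _ hs
  rw [min_sub_min_eq (haS j hj).le, min_sub_min_eq (haS j hj).le]
  have : max x (a j) ≤ max y (a j) := max_le_max hxy le_rfl
  exact sub_le_sub_right (min_le_min this le_rfl) _

include ha0 hak haS hbS in
lemma plin_strict {x y : ℝ} (hx0 : 0 ≤ x) (hxy : x < y) (hy1 : y ≤ 1) :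
    plin k a b x < plin k a b y := by
  classical
  have hx1 : x < 1 := lt_of_lt_of_le hxy hy1
  set j0 := Nat.findGreatest (fun j => a j ≤ x) k with hj0
  have hP0 : a 0 ≤ x := by rw [ha0]; exact hx0
  have hspec : a j0 ≤ x := Nat.findGreatest_spec (P := fun j => a j ≤ x) (Nat.zero_le k) hP0
  have hj0k : j0 < k := by
    rcases lt_or_eq_of_le (Nat.findGreatest_le (P := fun j => a j ≤ x) k) with h | h
    · exact h
    · exfalso; rw [hj0] at hspec; rw [h, hak] at hspec; exact absurd hspec (not_le.mpr hx1)
  have hgt : x < a (j0 + 1) := by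
    by_contra hle
    exact Nat.findGreatest_is_greatest (P := fun j => a j ≤ x) (Nat.lt_succ_self j0) hj0k
      (not_lt.mp hle)
  apply Finset.sum_lt_sum
  · intro j hj
    rw [Finset.mem_range] at hj
    have hs : 0 ≤ (b (j+1) - b j) / (a (j+1) - a j) :=
      le_of_lt (div_pos (sub_pos.mpr (hbS j hj)) (sub_pos.mpr (haS j hj)))
    apply mul_le_mul_of_nonneg_left _ hs
    rw [min_sub_min_eq (haS j hj).le, min_sub_min_eq (haS j hj).le]
    exact sub_le_sub_right (min_le_min (max_le_max hxy.le le_rfl) le_rfl) _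
  · refine ⟨j0, Finset.mem_range.mpr hj0k, ?_⟩
    have hs : 0 < (b (j0+1) - b j0) / (a (j0+1) - a j0) :=
      div_pos (sub_pos.mpr (hbS j0 hj0k)) (sub_pos.mpr (haS j0 hj0k))
    apply mul_lt_mul_of_pos_left _ hs
    rw [min_eq_right hspec, min_eq_right (hspec.trans hxy.le), min_eq_left hgt.le]
    have : x < min y (a (j0+1)) := lt_min hxy hgt
    linarith [min_le_left y (a (j0+1))]

lemma plin_continuous : Continuous (plin k a b) := by
  apply continuous_finset_sum
  intro j _
  exact continuous_const.mul ((continuous_id.min continuous_const).sub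
    (continuous_id.min continuous_const))

include ha0 hak haS in
lemma plin_dev {t : ℝ} (ht0 : 0 ≤ t) (ht1 : t ≤ 1) :
    |plin k a b t - t| ≤ ∑ j ∈ Finset.range k, |(b (j+1) - b j) - (a (j+1) - a j)| := by
  have ht' : ∑ j ∈ Finset.range k, (min t (a (j+1)) - min t (a j)) = t := by
    rw [Finset.sum_range_sub (fun j => min t (a j)), ha0, hak, min_eq_left ht1,
      min_eq_right ht0, sub_zero]
  have heq : plin k a b t - t = ∑ j ∈ Finset.range k,
      ((b (j+1) - b j) / (a (j+1) - a j) - 1) * (min t (a (j+1)) - min t (a j)) := by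
    calc plin k a b t - t
        = (∑ j ∈ Finset.range k, (b (j+1) - b j) / (a (j+1) - a j) *
            (min t (a (j+1)) - min t (a j)))
          - ∑ j ∈ Finset.range k, (min t (a (j+1)) - min t (a j)) := by rw [plin, ht']
      _ = ∑ j ∈ Finset.range k, ((b (j+1) - b j) / (a (j+1) - a j) *
            (min t (a (j+1)) - min t (a j)) - (min t (a (j+1)) - min t (a j))) :=
          (Finset.sum_sub_distrib _ _).symm
      _ = _ := by apply Finset.sum_congr rfl; intro j _; ring
  rw [heq]
  refine (Finset.abs_sum_le_sum_abs _ _).trans (Finset.sum_le_sum ?_)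
  intro j hj
  rw [Finset.mem_range] at hj
  have hd : 0 < a (j+1) - a j := sub_pos.mpr (haS j hj)
  have hΔ0 : 0 ≤ min t (a (j+1)) - min t (a j) :=
    sub_nonneg.mpr (min_le_min le_rfl (haS j hj).le)
  have hΔ1 : min t (a (j+1)) - min t (a j) ≤ a (j+1) - a j := by
    rw [min_sub_min_eq (haS j hj).le]
    exact sub_le_sub_right (min_le_right _ _) _
  rw [abs_mul, abs_of_nonneg hΔ0]
  calc |(b (j+1) - b j) / (a (j+1) - a j) - 1| * (min t (a (j+1)) - min t (a j))
      ≤ |(b (j+1) - b j) / (a (j+1) - a j) - 1| * (a (j+1) - a j) :=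
        mul_le_mul_of_nonneg_left hΔ1 (abs_nonneg _)
    _ = |(b (j+1) - b j) - (a (j+1) - a j)| := by
        have habs : |(b (j+1) - b j) / (a (j+1) - a j) - 1| * (a (j+1) - a j)
            = |((b (j+1) - b j) / (a (j+1) - a j) - 1) * (a (j+1) - a j)| := by
          rw [abs_mul, abs_of_pos hd]
        rw [habs, sub_mul, div_mul_cancel₀ _ hd.ne', one_mul]

include ha0 hak hb0 hbk haS hbS in
lemma plin_mem_timeChanges : plin k a b ∈ timeChanges := by
  have h0 : plin k a b 0 = 0 := by
    have := plin_node (b := b) haS 0 (Nat.zero_le k); rw [ha0] at this; rw [this]; ring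
  have h1 : plin k a b 1 = 1 := by
    have := plin_node (b := b) haS k le_rfl; rw [hak, hb0, hbk, sub_zero] at this; exact this
  have hsm : StrictMonoOn (plin k a b) (Icc 0 1) := by
    intro x hx y hy hxy
    exact plin_strict ha0 hak haS hbS hx.1 hxy hy.2
  have hmap : MapsTo (plin k a b) (Icc (0:ℝ) 1) (Icc (0:ℝ) 1) := by
    intro x hx
    constructor
    · rw [← h0]; exact plin_mono haS hbS hx.1
    · rw [← h1]; exact plin_mono haS hbS hx.2
  refine ⟨h0, h1, hsm, plin_continuous.continuousOn, hmap, ?_⟩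
  have := intermediate_value_Icc (zero_le_one) (plin_continuous (k := k) (a := a) (b := b)).continuousOn
  rw [h0, h1] at this
  exact this

end plin

def OscLE (f : ℝ → ℝ) (ε s t : ℝ) : Prop :=
  ∀ u ∈ Ico s t, ∀ v ∈ Ico s t, |f u - f v| ≤ ε

def PartUpTo (f : ℝ → ℝ) (ε x : ℝ) : Prop :=
  ∃ (k : ℕ) (p : ℕ → ℝ), p 0 = 0 ∧ p k = x ∧ (∀ j < k, p j < p (j+1)) ∧
    ∀ j < k, OscLE f ε (p j) (p (j+1))

lemma partUpTo_extend {f : ℝ → ℝ} {ε x y : ℝ} (h : PartUpTo f ε x) (hxy : x < y)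
    (hosc : OscLE f ε x y) : PartUpTo f ε y := by
  obtain ⟨k, p, h0, hk, hS, hO⟩ := h
  refine ⟨k+1, fun j => if j ≤ k then p j else y, by simp [h0], by simp, ?_, ?_⟩
  · intro j hj
    rcases Nat.lt_succ_iff_lt_or_eq.mp hj with h' | h'
    · simp only [if_pos (Nat.le_of_lt h'), if_pos (Nat.succ_le_of_lt h')]
      exact hS j h'
    · subst h'
      simp only [if_pos le_rfl, if_neg (Nat.not_succ_le_self j), hk]
      exact hxy
  · intro j hj
    rcases Nat.lt_succ_iff_lt_or_eq.mp hj with h' | h'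
    · simp only [if_pos (Nat.le_of_lt h'), if_pos (Nat.succ_le_of_lt h')]
      exact hO j h'
    · subst h'
      simp only [if_pos le_rfl, if_neg (Nat.not_succ_le_self j), hk]
      exact hosc

lemma exists_osc_partition {f : ℝ → ℝ} (hf : CadlagOn01 f) {ε : ℝ} (hε : 0 < ε) :
    PartUpTo f ε 1 := by
  have hright : ∀ x ∈ Ico (0:ℝ) 1, ∃ y, x < y ∧ y ≤ 1 ∧ OscLE f ε x y := by
    intro x hx
    have hev : ∀ᶠ u in nhdsWithin x (Ici x), dist (f u) (f x) < ε/2 :=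
      Metric.tendsto_nhds.mp (hf.1 x hx) (ε/2) (by linarith)
    rw [eventually_iff, mem_nhdsGE_iff_exists_Ico_subset] at hev
    obtain ⟨u, hu, hsub⟩ := hev
    refine ⟨min u 1, lt_min hu hx.2, min_le_right _ _, ?_⟩
    intro p hp q hq
    have hp' := hsub ⟨hp.1, lt_of_lt_of_le hp.2 (min_le_left _ _)⟩
    have hq' := hsub ⟨hq.1, lt_of_lt_of_le hq.2 (min_le_left _ _)⟩
    rw [mem_setOf_eq, Real.dist_eq] at hp' hq'
    calc |f p - f q| ≤ |f p - f x| + |f x - f q| := abs_sub_le _ _ _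
      _ ≤ ε := by rw [abs_sub_comm (f x) (f q)]; linarith
  set A := {x : ℝ | x ∈ Icc (0:ℝ) 1 ∧ PartUpTo f ε x} with hA
  have h0P : PartUpTo f ε 0 :=
    ⟨0, fun _ => 0, rfl, rfl, fun j hj => absurd hj (Nat.not_lt_zero j),
      fun j hj => absurd hj (Nat.not_lt_zero j)⟩
  have h0A : (0:ℝ) ∈ A := ⟨⟨le_rfl, zero_le_one⟩, h0P⟩
  have hbdd : BddAbove A := ⟨1, fun x hx => hx.1.2⟩
  have hne : A.Nonempty := ⟨0, h0A⟩
  set m := sSup A with hm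
  have hm1 : m ≤ 1 := csSup_le hne (fun x hx => hx.1.2)
  have hm0 : 0 ≤ m := le_csSup hbdd h0A
  have hm_pos : 0 < m := by
    obtain ⟨y, hy, hy1, hosc⟩ := hright 0 ⟨le_rfl, zero_lt_one⟩
    have hyA : y ∈ A := ⟨⟨hy.le, hy1⟩, partUpTo_extend h0P hy hosc⟩
    exact lt_of_lt_of_le hy (le_csSup hbdd hyA)
  have hmA : PartUpTo f ε m := by
    obtain ⟨c, hc⟩ := hf.2 m ⟨hm_pos, hm1⟩
    have hev : ∀ᶠ u in nhdsWithin m (Iio m), dist (f u) c < ε/2 :=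
      Metric.tendsto_nhds.mp hc (ε/2) (by linarith)
    rw [eventually_iff, mem_nhdsLT_iff_exists_Ioo_subset] at hev
    obtain ⟨l, hl, hsub⟩ := hev
    obtain ⟨x, hxA, hlx⟩ := exists_lt_of_lt_csSup hne hl
    rcases eq_or_lt_of_le (le_csSup hbdd hxA) with he | hlt
    · have hmx : m = x := hm.trans he.symm
      rw [hmx]; exact hxA.2
    · refine partUpTo_extend hxA.2 hlt ?_
      intro p hp q hq
      have hp' := hsub ⟨lt_of_lt_of_le hlx hp.1, hp.2⟩
      have hq' := hsub ⟨lt_of_lt_of_le hlx hq.1, hq.2⟩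
      rw [mem_setOf_eq, Real.dist_eq] at hp' hq'
      calc |f p - f q| ≤ |f p - c| + |c - f q| := abs_sub_le _ _ _
        _ ≤ ε := by rw [abs_sub_comm c (f q)]; linarith
  by_cases hme : m = 1
  · exact hme ▸ hmA
  · exfalso
    have hm1' : m < 1 := lt_of_le_of_ne hm1 hme
    obtain ⟨y, hy, hy1, hosc⟩ := hright m ⟨hm0, hm1'⟩
    have hyA : y ∈ A := ⟨⟨hm0.trans hy.le, hy1⟩, partUpTo_extend hmA hy hosc⟩
    exact absurd (le_csSup hbdd hyA) (not_le.mpr hy)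

lemma id_mem_timeChanges : (fun t : ℝ => t) ∈ timeChanges :=
  ⟨rfl, rfl, fun _ _ _ _ h => h, continuous_id.continuousOn, fun _ hx => hx,
    fun x hx => ⟨x, hx, rfl⟩⟩

lemma J1dist_nonneg (x y : ℝ → ℝ) : 0 ≤ J1dist x y := by
  apply le_csInf ((Set.Nonempty.image _ ⟨_, id_mem_timeChanges⟩))
  rintro v ⟨l', -, rfl⟩
  exact add_nonneg (Real.iSup_nonneg fun t => abs_nonneg _)
    (Real.iSup_nonneg fun t => abs_nonneg _)

lemma J1dist_le (x y : ℝ → ℝ) {l : ℝ → ℝ} (hl : l ∈ timeChanges) {C D : ℝ}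
    (hC0 : 0 ≤ C) (hD0 : 0 ≤ D)
    (hC : ∀ t : Icc (0:ℝ) 1, |l t - (t:ℝ)| ≤ C)
    (hD : ∀ t : Icc (0:ℝ) 1, |x (l t) - y t| ≤ D) :
    J1dist x y ≤ C + D := by
  have hbdd : BddBelow ((fun l => (⨆ t : Icc (0:ℝ) 1, |l t - (t:ℝ)|) +
      ⨆ t : Icc (0:ℝ) 1, |x (l t) - y t|) '' timeChanges) := by
    refine ⟨0, ?_⟩
    rintro v ⟨l', -, rfl⟩
    exact add_nonneg (Real.iSup_nonneg fun t => abs_nonneg _)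
      (Real.iSup_nonneg fun t => abs_nonneg _)
  refine (csInf_le hbdd ⟨l, hl, rfl⟩).trans ?_
  exact add_le_add (Real.iSup_le hC hC0) (Real.iSup_le hD hD0)


lemma dyadic_nodes (n : ℕ) {k : ℕ} {p : ℕ → ℝ} (hp0 : p 0 = 0) (hpk : p k = 1)
    (hgap : ∀ j < k, (1:ℝ)/2^n < p (j+1) - p j) :
    ∃ b : ℕ → ℝ, b 0 = 0 ∧ b k = 1 ∧ (∀ j < k, b j < b (j+1)) ∧ (∀ j, p j ≤ b j) ∧
      (∀ j, b j < p j + 1/2^n) ∧ (∀ j, ∃ z : ℤ, b j = (z : ℝ)/2^n) := by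
  have hpow : (0:ℝ) < 2^n := by positivity
  refine ⟨fun j => ((⌈(2:ℝ)^n * p j⌉ : ℤ) : ℝ) / 2^n, ?_, ?_, ?_, ?_, ?_, ?_⟩
  · simp [hp0]
  · show ((⌈(2:ℝ)^n * p k⌉ : ℤ) : ℝ) / 2^n = 1
    rw [hpk, mul_one, show (2:ℝ)^n = ((2^n : ℤ) : ℝ) by push_cast; ring, Int.ceil_intCast]
    push_cast
    exact div_self hpow.ne'
  · intro j hj
    have h1 : 2^n * p j + 1 < 2^n * p (j+1) := by
      have h := hgap j hj
      rw [div_lt_iff₀ hpow] at h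
      nlinarith
    have h2 : (⌈(2:ℝ)^n * p j⌉ : ℝ) < (⌈(2:ℝ)^n * p (j+1)⌉ : ℝ) :=
      lt_of_lt_of_le (lt_of_lt_of_le (Int.ceil_lt_add_one _) h1.le) (Int.le_ceil _)
    exact div_lt_div_of_pos_right h2 hpow
  · intro j
    rw [le_div_iff₀ hpow]
    calc p j * 2^n = 2^n * p j := by ring
      _ ≤ _ := Int.le_ceil _
  · intro j
    rw [div_lt_iff₀ hpow]
    calc ((⌈(2:ℝ)^n * p j⌉ : ℤ) : ℝ) < 2^n * p j + 1 := Int.ceil_lt_add_one _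
      _ = (p j + 1/2^n) * 2^n := by field_simp
  · exact fun j => ⟨_, rfl⟩

lemma main_det (f : ℝ → ℝ) (g : ℕ → ℝ → ℝ) (hf : CadlagOn01 f)
    (hconst : ∀ n, ∀ t ∈ Ico (0 : ℝ) 1, g n t = g n (((⌊(2 : ℝ) ^ n * t⌋ : ℤ) : ℝ) / 2 ^ n))
    (H : ∀ δ : ℝ, 0 < δ → ∃ N : ℕ, ∀ n ≥ N, ∀ i ≤ 2 ^ n,
      |g n ((i : ℝ) / 2 ^ n) - f ((i : ℝ) / 2 ^ n)| ≤ δ) :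
    Tendsto (fun n => J1dist (g n) f) atTop (nhds 0) := by
  rw [Metric.tendsto_nhds]
  intro ε' hε'
  have hε : 0 < ε' / 4 := by positivity
  obtain ⟨k, p, hp0, hpk, hpS, hpO⟩ := exists_osc_partition hf hε
  have hk0 : 0 < k := by
    rcases Nat.eq_zero_or_pos k with h | h
    · subst h; rw [hp0] at hpk; norm_num at hpk
    · exact h
  have hp_mem : ∀ j ≤ k, 0 ≤ p j ∧ p j ≤ 1 := fun j hj =>
    ⟨hp0 ▸ chain_mono hpS 0 j (Nat.zero_le j) hj, hpk ▸ chain_mono hpS j k hj le_rfl⟩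
  obtain ⟨N1, hN1⟩ := H (ε'/4) hε
  have hrne : (Finset.range k).Nonempty := Finset.nonempty_range_iff.mpr hk0.ne'
  have hgap : 0 < (Finset.range k).inf' hrne (fun j => p (j+1) - p j) := by
    rw [Finset.lt_inf'_iff]
    exact fun j hj => sub_pos.mpr (hpS j (Finset.mem_range.mp hj))
  have h2n : Tendsto (fun n : ℕ => ((1:ℝ)/2)^n) atTop (nhds 0) :=
    tendsto_pow_atTop_nhds_zero_of_lt_one (by norm_num) (by norm_num)
  have hev1 : ∀ᶠ n in atTop,
      ((1:ℝ)/2)^n < (Finset.range k).inf' hrne (fun j => p (j+1) - p j) :=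
    h2n.eventually (gt_mem_nhds hgap)
  have hev2 : ∀ᶠ n in atTop, (2*k : ℝ) * ((1:ℝ)/2)^n < ε'/4 := by
    have : Tendsto (fun n : ℕ => (2*k : ℝ) * ((1:ℝ)/2)^n) atTop (nhds 0) := by
      simpa using h2n.const_mul (2*k : ℝ)
    exact this.eventually (gt_mem_nhds hε)
  filter_upwards [hev1, hev2, eventually_ge_atTop N1] with n hn1 hn2 hnN
  rw [Real.dist_eq, sub_zero, abs_of_nonneg (J1dist_nonneg _ _)]
  have hpow : (0:ℝ) < 2^n := by positivity
  have hpinv : ((1:ℝ)/2)^n = 1/2^n := by rw [div_pow, one_pow]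
  have hgapn : ∀ j < k, (1:ℝ)/2^n < p (j+1) - p j := by
    intro j hj
    rw [← hpinv]
    exact lt_of_lt_of_le hn1 (Finset.inf'_le _ (Finset.mem_range.mpr hj))
  obtain ⟨b, hb0, hbk, hbS, hb_lb, hb_ub, hb_dy⟩ := dyadic_nodes n hp0 hpk hgapn
  have hb_mem : ∀ j ≤ k, 0 ≤ b j ∧ b j ≤ 1 := fun j hj =>
    ⟨hb0 ▸ chain_mono hbS 0 j (Nat.zero_le j) hj, hbk ▸ chain_mono hbS j k hj le_rfl⟩
  have hl := plin_mem_timeChanges hp0 hpk hb0 hbk hpS hbS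
  have hbp : ∀ j, |b j - p j| ≤ 1/2^n := by
    intro j
    rw [abs_of_nonneg (sub_nonneg.mpr (hb_lb j))]
    have := hb_ub j
    linarith
  have hC0 : 0 ≤ ∑ j ∈ Finset.range k, |(b (j+1) - b j) - (p (j+1) - p j)| :=
    Finset.sum_nonneg fun j _ => abs_nonneg _
  have hC_lt : ∑ j ∈ Finset.range k, |(b (j+1) - b j) - (p (j+1) - p j)| < ε'/4 := by
    have hCle : ∑ j ∈ Finset.range k, |(b (j+1) - b j) - (p (j+1) - p j)|
        ≤ (k:ℝ) * (2/2^n) := by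
      calc ∑ j ∈ Finset.range k, |(b (j+1) - b j) - (p (j+1) - p j)|
          ≤ ∑ _j ∈ Finset.range k, (2/2^n : ℝ) := by
            apply Finset.sum_le_sum
            intro j _
            calc |(b (j+1) - b j) - (p (j+1) - p j)|
                = |(b (j+1) - p (j+1)) - (b j - p j)| := by ring_nf
              _ ≤ |b (j+1) - p (j+1)| + |b j - p j| := abs_sub _ _
              _ ≤ 1/2^n + 1/2^n := add_le_add (hbp (j+1)) (hbp j)
              _ = 2/2^n := by ring
        _ = (k:ℝ) * (2/2^n) := by rw [Finset.sum_const, Finset.card_range]; ring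
    have heq : (k:ℝ) * (2/2^n) = (2*k : ℝ) * ((1:ℝ)/2)^n := by rw [hpinv]; ring
    calc ∑ j ∈ Finset.range k, |(b (j+1) - b j) - (p (j+1) - p j)|
        ≤ (2*k : ℝ) * ((1:ℝ)/2)^n := heq ▸ hCle
      _ < ε'/4 := hn2
  have hsup2 : ∀ t : Icc (0:ℝ) 1, |g n (plin k p b t) - f t| ≤ ε'/4 + ε'/4 := by
    rintro ⟨t, ht0, ht1⟩
    simp only
    rcases eq_or_lt_of_le ht1 with ht1' | ht1'
    · subst ht1'
      rw [hl.2.1]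
      have h1 := hN1 n hnN (2^n) le_rfl
      push_cast at h1
      rw [div_self hpow.ne'] at h1
      linarith
    · classical
      have hspec : p (Nat.findGreatest (fun j => p j ≤ t) k) ≤ t :=
        Nat.findGreatest_spec (P := fun j => p j ≤ t) (Nat.zero_le k) (by show p 0 ≤ t; rw [hp0]; exact ht0)
      set j0 := Nat.findGreatest (fun j => p j ≤ t) k with hj0def
      have hj0k : j0 < k := by
        rcases lt_or_eq_of_le (Nat.findGreatest_le (P := fun j => p j ≤ t) k) with h | h
        · exact h
        · exfalso
          rw [hj0def, h, hpk] at hspec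
          exact absurd hspec (not_le.mpr ht1')
      have hgt : t < p (j0 + 1) := by
        by_contra hle
        exact Nat.findGreatest_is_greatest (P := fun j => p j ≤ t) (Nat.lt_succ_self j0) hj0k
          (not_lt.mp hle)
      have hnode0 : plin k p b (p j0) = b j0 := by
        rw [plin_node hpS j0 hj0k.le, hb0, sub_zero]
      have hnode1 : plin k p b (p (j0+1)) = b (j0+1) := by
        rw [plin_node hpS (j0+1) hj0k, hb0, sub_zero]
      have hL_lb : b j0 ≤ plin k p b t := hnode0 ▸ plin_mono hpS hbS hspec
      have hL_ub : plin k p b t < b (j0+1) :=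
        hnode1 ▸ plin_strict hp0 hpk hpS hbS ht0 hgt (hp_mem (j0+1) hj0k).2
      have hL0 : 0 ≤ plin k p b t := le_trans (hb_mem j0 hj0k.le).1 hL_lb
      have hL1 : plin k p b t < 1 := lt_of_lt_of_le hL_ub (hb_mem (j0+1) hj0k).2
      rw [hconst n (plin k p b t) ⟨hL0, hL1⟩]
      have hm0 : 0 ≤ ⌊(2:ℝ)^n * plin k p b t⌋ :=
        Int.floor_nonneg.mpr (mul_nonneg hpow.le hL0)
      have hm_ub : ⌊(2:ℝ)^n * plin k p b t⌋ < 2^n := by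
        rw [Int.floor_lt]
        push_cast
        nlinarith
      have hD_le_L : ((⌊(2:ℝ)^n * plin k p b t⌋ : ℤ) : ℝ) / 2^n ≤ plin k p b t := by
        rw [div_le_iff₀ hpow]
        calc ((⌊(2:ℝ)^n * plin k p b t⌋ : ℤ) : ℝ) ≤ 2^n * plin k p b t := Int.floor_le _
          _ = plin k p b t * 2^n := by ring
      have hD_lb : p j0 ≤ ((⌊(2:ℝ)^n * plin k p b t⌋ : ℤ) : ℝ) / 2^n := by
        obtain ⟨z, hz⟩ := hb_dy j0
        have hz_le : (z : ℝ) ≤ 2^n * plin k p b t := by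
          rw [hz, div_le_iff₀ hpow] at hL_lb
          nlinarith [hL_lb]
        have hzf : z ≤ ⌊(2:ℝ)^n * plin k p b t⌋ := Int.le_floor.mpr hz_le
        calc p j0 ≤ b j0 := hb_lb j0
          _ = (z:ℝ)/2^n := hz
          _ ≤ _ := by gcongr
      have hD_ub : ((⌊(2:ℝ)^n * plin k p b t⌋ : ℤ) : ℝ) / 2^n < p (j0+1) := by
        obtain ⟨z, hz⟩ := hb_dy (j0+1)
        have h1 : ((⌊(2:ℝ)^n * plin k p b t⌋ : ℤ) : ℝ) < (z:ℝ) := by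
          have h2 := lt_of_le_of_lt hD_le_L hL_ub
          rw [hz, div_lt_div_iff₀ hpow hpow] at h2
          nlinarith [h2]
        have h3 : ⌊(2:ℝ)^n * plin k p b t⌋ ≤ z - 1 := by
          have : ⌊(2:ℝ)^n * plin k p b t⌋ < z := by exact_mod_cast h1
          omega
        calc ((⌊(2:ℝ)^n * plin k p b t⌋ : ℤ) : ℝ) / 2^n
            ≤ ((z:ℝ) - 1)/2^n := by
              gcongr
              have : ((⌊(2:ℝ)^n * plin k p b t⌋ : ℤ) : ℝ) ≤ ((z - 1 : ℤ) : ℝ) := by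
                exact_mod_cast h3
              push_cast at this
              linarith
          _ = b (j0+1) - 1/2^n := by rw [hz]; ring
          _ < p (j0+1) := by have := hb_ub (j0+1); linarith
      have hosc := hpO j0 hj0k (((⌊(2:ℝ)^n * plin k p b t⌋ : ℤ) : ℝ) / 2^n) ⟨hD_lb, hD_ub⟩
        t ⟨hspec, hgt⟩
      have hdyb : |g n (((⌊(2:ℝ)^n * plin k p b t⌋ : ℤ) : ℝ) / 2^n)
          - f (((⌊(2:ℝ)^n * plin k p b t⌋ : ℤ) : ℝ) / 2^n)| ≤ ε'/4 := by
        exact hN1 n hnN ((⌊(2:ℝ)^n * plin k p b t⌋ : ℤ) : ℝ) (by exact_mod_cast hm_ub.le)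
      calc |g n (((⌊(2:ℝ)^n * plin k p b t⌋ : ℤ) : ℝ) / 2^n) - f t|
          ≤ |g n (((⌊(2:ℝ)^n * plin k p b t⌋ : ℤ) : ℝ) / 2^n)
              - f (((⌊(2:ℝ)^n * plin k p b t⌋ : ℤ) : ℝ) / 2^n)|
            + |f (((⌊(2:ℝ)^n * plin k p b t⌋ : ℤ) : ℝ) / 2^n) - f t| := abs_sub_le _ _ _
        _ ≤ ε'/4 + ε'/4 := add_le_add hdyb hosc
  have hJ := J1dist_le (g n) f hl hC0 (by positivity : (0:ℝ) ≤ ε'/4 + ε'/4)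
    (fun t => plin_dev hp0 hpk hpS t.2.1 t.2.2) hsup2
  linarith [hJ, hC_lt]

/-- if the `X^n` have càdlàg paths, are constant on the dyadic intervals
`[i/2ⁿ, (i+1)/2ⁿ)`, and `max_{d ∈ D_n} |X^n_d − X_d| → 0` a.s., then `X^n → X` a.s. in
Skorokhod's J1 topology on `D_ℝ[0,1]`. -/
theorem dyadic_approximation_J1_convergence
    {Ω : Type*} [MeasurableSpace Ω] (μ : Measure Ω) [IsProbabilityMeasure μ]
    (X : ℝ → Ω → ℝ) (Xn : ℕ → ℝ → Ω → ℝ)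
    (hX : ∀ ω, CadlagOn01 (fun t => X t ω))
    (hXn : ∀ n ω, CadlagOn01 (fun t => Xn n t ω))
    (hconst : ∀ n, ∀ ω, ∀ t ∈ Ico (0 : ℝ) 1,
      Xn n t ω = Xn n (((⌊(2 : ℝ) ^ n * t⌋ : ℤ) : ℝ) / 2 ^ n) ω)
    (hdy : ∀ᵐ ω ∂μ, ∀ δ : ℝ, 0 < δ → ∃ N : ℕ, ∀ n ≥ N, ∀ i ≤ 2 ^ n,
      |Xn n ((i : ℝ) / 2 ^ n) ω - X ((i : ℝ) / 2 ^ n) ω| ≤ δ) :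
    ∀ᵐ ω ∂μ,
      Tendsto (fun n => J1dist (fun t => Xn n t ω) (fun t => X t ω)) atTop (nhds 0) := by
  filter_upwards [hdy] with ω hω
  exact main_det (fun t => X t ω) (fun n t => Xn n t ω) (hX ω)
    (fun n t ht => hconst n ω t ht) hω
end

section
/- Let A be a bounded monotonic trawl set with φ(T) = 0 for some T < 0, let τ > 0, and set I = ⌈−T/τ⌉. Define the slices S_{i1} = {t ≤ τ} ∩ (A_{iτ} \ A_{(i+1)τ}) and S_{ij} = ({(j−1)τ < t ≤ jτ} ∩ A_{(i+j−1)τ}) \ A_{(i+j)τ} for j ≥ 2. Then the Lebesgue measures s_{ij} = Leb(S_{ij}) satisfy s_{i1} = ∫_{−iτ}^{(−i+1)τ} φ(t) dt, s_{i2} = s_{i,1} − s_{i+1,1} (with s_{I+1,1} = 0), and s_{ij} = s_{ij'} for all j, j' ≥ 2. -/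
open MeasureTheory Set Filter

/-- The translated monotonic trawl set `A_t = A + (t, 0)`. -/
def trawlSetAt (φ : ℝ → ℝ) (t : ℝ) : Set (ℝ × ℝ) :=
  {p | p.1 - t < 0 ∧ 0 < p.2 ∧ p.2 < φ (p.1 - t)}

/-- The slice partition of the bounded monotonic trawl sets `A_τ, ..., A_{kτ}`:
`S_{i1} = {t ≤ τ} ∩ (A_{iτ} \ A_{(i+1)τ})` and, for `j ≥ 2`,
`S_{ij} = ({(j−1)τ < t ≤ jτ} ∩ A_{(i+j−1)τ}) \ A_{(i+j)τ}`. -/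
def sliceSet (φ : ℝ → ℝ) (τ : ℝ) (i j : ℕ) : Set (ℝ × ℝ) :=
  if j = 1 then
    {p : ℝ × ℝ | p.1 ≤ τ} ∩ (trawlSetAt φ ((i : ℝ) * τ) \ trawlSetAt φ (((i : ℝ) + 1) * τ))
  else
    ({p : ℝ × ℝ | ((j : ℝ) - 1) * τ < p.1 ∧ p.1 ≤ (j : ℝ) * τ} ∩
        trawlSetAt φ (((i : ℝ) + (j : ℝ) - 1) * τ)) \
      trawlSetAt φ (((i : ℝ) + (j : ℝ)) * τ)

section Helpers

variable {φ : ℝ → ℝ} {T : ℝ}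

private def psi (φ : ℝ → ℝ) : ℝ → ℝ := fun x => φ (min x 0)

private lemma psi_eq (φ : ℝ → ℝ) {x : ℝ} (hx : x ≤ 0) : psi φ x = φ x := by
  simp [psi, min_eq_left hx]

private lemma psi_cont (hφc : ContinuousOn φ (Iic 0)) : Continuous (psi φ) := by
  apply hφc.comp_continuous (continuous_min.comp (continuous_id.prodMk continuous_const))
  intro x; simpa using min_le_right x 0

private lemma psi_nonneg (hφ0 : ∀ s ≤ (0:ℝ), 0 ≤ φ s) (x : ℝ) : 0 ≤ psi φ x :=
  hφ0 _ (min_le_right x 0)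

private lemma psi_mono (hφm : MonotoneOn φ (Iic 0)) : Monotone (psi φ) :=
  fun x y hxy => hφm (min_le_right x 0) (min_le_right y 0) (min_le_min hxy le_rfl)

private lemma psi_below (hφbelow : ∀ s ≤ T, φ s = 0) (hT : T < 0) {x : ℝ} (hx : x ≤ T) :
    psi φ x = 0 := by
  rw [psi_eq φ (hx.trans hT.le)]; exact hφbelow x hx

private lemma psi_int (hφc : ContinuousOn φ (Iic 0)) (hφbelow : ∀ s ≤ T, φ s = 0)
    (hT : T < 0) (b : ℝ) : IntegrableOn (psi φ) (Iic b) := by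
  have h1 : IntegrableOn (psi φ) (Iic (min T b)) := by
    refine (integrableOn_zero (s := Iic (min T b))).congr_fun ?_ measurableSet_Iic
    intro x hx
    exact (psi_below hφbelow hT ((mem_Iic.1 hx).trans (min_le_left T b))).symm
  have h2 : IntegrableOn (psi φ) (Ioc (min T b) b) := (psi_cont hφc).integrableOn_Ioc
  have := h1.union h2
  rwa [Iic_union_Ioc_eq_Iic (min_le_right T b)] at this

private lemma psi_int_shift (hφc : ContinuousOn φ (Iic 0)) (hφbelow : ∀ s ≤ T, φ s = 0)
    (hT : T < 0) (c b : ℝ) : IntegrableOn (fun t => psi φ (t - c)) (Iic b) := by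
  have h := ((measurePreserving_sub_right (volume : Measure ℝ) c).integrableOn_comp_preimage
    (MeasurableEquiv.subRight c).measurableEmbedding).2 (psi_int hφc hφbelow hT (b - c))
  simpa [Function.comp_def] using h

private lemma psi_shift_integral (c : ℝ) (b : ℝ) :
    ∫ t in Iic b, psi φ (t - c) = ∫ t in Iic (b - c), psi φ t := by
  have h := (measurePreserving_sub_right (volume : Measure ℝ) c).setIntegral_preimage_emb
    (MeasurableEquiv.subRight c).measurableEmbedding (psi φ) (Iic (b - c))
  simpa using h

private lemma psi_shift_integral_Ioc (c a b : ℝ) :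
    ∫ t in Ioc a b, psi φ (t - c) = ∫ t in Ioc (a - c) (b - c), psi φ t := by
  have h := (measurePreserving_sub_right (volume : Measure ℝ) c).setIntegral_preimage_emb
    (MeasurableEquiv.subRight c).measurableEmbedding (psi φ) (Ioc (a - c) (b - c))
  have hpre : (fun x : ℝ => x - c) ⁻¹' Ioc (a - c) (b - c) = Ioc a b := by
    ext x; simp [mem_Ioc]
  rw [hpre] at h
  simpa using h

private lemma trawl_eq (φ : ℝ → ℝ) (c : ℝ) :
    trawlSetAt φ c = {p : ℝ × ℝ | p.1 - c < 0 ∧ 0 < p.2 ∧ p.2 < psi φ (p.1 - c)} := by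
  ext p
  simp only [trawlSetAt, mem_setOf_eq]
  constructor
  · rintro ⟨h1, h2, h3⟩
    refine ⟨h1, h2, ?_⟩; rw [psi_eq φ h1.le]; exact h3
  · rintro ⟨h1, h2, h3⟩
    refine ⟨h1, h2, ?_⟩; rwa [psi_eq φ h1.le] at h3

private lemma trawl_open (hφc : ContinuousOn φ (Iic 0)) (c : ℝ) :
    IsOpen (trawlSetAt φ c) := by
  rw [trawl_eq]
  have hc : Continuous (psi φ) := psi_cont hφc
  have heq : {p : ℝ × ℝ | p.1 - c < 0 ∧ 0 < p.2 ∧ p.2 < psi φ (p.1 - c)}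
      = {p : ℝ × ℝ | p.1 - c < 0} ∩ ({p : ℝ × ℝ | 0 < p.2} ∩
        {p : ℝ × ℝ | p.2 < psi φ (p.1 - c)}) := by ext p; simp [and_assoc]
  rw [heq]
  exact (isOpen_lt (by fun_prop) continuous_const).inter
    ((isOpen_lt continuous_const continuous_snd).inter
      (isOpen_lt continuous_snd (hc.comp (by fun_prop))))

private lemma vol_Ioo_diff {f g : ℝ} (h0 : 0 ≤ f) (hfg : f ≤ g) :
    volume (Ioo 0 g \ Ioo 0 f) = ENNReal.ofReal (g - f) := by
  rcases h0.eq_or_lt with h | h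
  · rw [← h, Ioo_self, diff_empty, Real.volume_Ioo]
  · have : Ioo 0 g \ Ioo 0 f = Ico f g := by
      ext x
      simp only [mem_diff, mem_Ioo, mem_Ico, not_and, not_lt]
      constructor
      · rintro ⟨⟨hx0, hxg⟩, hx⟩; exact ⟨hx hx0, hxg⟩
      · rintro ⟨hfx, hxg⟩; exact ⟨⟨h.trans_le hfx, hxg⟩, fun _ => hfx⟩
    rw [this, Real.volume_Ico]

private lemma vol_core (hφc : ContinuousOn φ (Iic 0)) (hφm : MonotoneOn φ (Iic 0))
    (hφ0 : ∀ s ≤ (0:ℝ), 0 ≤ φ s)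
    (K : Set ℝ) (hK : MeasurableSet K) (c d : ℝ) (hcd : c ≤ d)
    (hKc : K ⊆ Iic c) (hKd : K ⊆ Iio d) :
    volume (({p : ℝ × ℝ | p.1 ∈ K} ∩ trawlSetAt φ c) \ trawlSetAt φ d)
      = ∫⁻ t in K, ENNReal.ofReal (psi φ (t - c) - psi φ (t - d)) := by
  set S := ({p : ℝ × ℝ | p.1 ∈ K} ∩ trawlSetAt φ c) \ trawlSetAt φ d with hS
  have hSm : MeasurableSet S :=
    ((measurable_fst hK).inter (trawl_open hφc c).measurableSet).diff
      (trawl_open hφc d).measurableSet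
  rw [Measure.volume_eq_prod, Measure.prod_apply hSm]
  have key : ∀ t : ℝ, t ≠ c → volume (Prod.mk t ⁻¹' S)
      = K.indicator (fun t => ENNReal.ofReal (psi φ (t - c) - psi φ (t - d))) t := by
    intro t ht
    by_cases htK : t ∈ K
    · have htc : t < c := lt_of_le_of_ne (hKc htK) ht
      have htd : t < d := hKd htK
      have hpre : Prod.mk t ⁻¹' S = Ioo 0 (psi φ (t - c)) \ Ioo 0 (psi φ (t - d)) := by
        rw [hS, trawl_eq φ c, trawl_eq φ d]
        ext x
        simp only [mem_preimage, mem_diff, mem_inter_iff, mem_setOf_eq, mem_Ioo,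
          sub_neg]
        constructor
        · rintro ⟨⟨_, _, hx2, hx3⟩, hnot⟩
          exact ⟨⟨hx2, hx3⟩, fun hmem => hnot ⟨htd, hmem.1, hmem.2⟩⟩
        · rintro ⟨⟨hx2, hx3⟩, hnot⟩
          exact ⟨⟨htK, htc, hx2, hx3⟩, fun hmem => hnot ⟨hmem.2.1, hmem.2.2⟩⟩
      rw [hpre, vol_Ioo_diff (psi_nonneg hφ0 _)
        (psi_mono hφm (by linarith : t - d ≤ t - c)), indicator_of_mem htK]
    · have hpre : Prod.mk t ⁻¹' S = ∅ := by
        rw [hS]; ext x; simp [htK]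
      rw [hpre, indicator_of_notMem htK]; simp
  rw [← lintegral_indicator hK]
  apply lintegral_congr_ae
  filter_upwards [compl_mem_ae_iff.2 (measure_singleton c)] with t ht
  exact key t ht

private lemma vol_core' (hφc : ContinuousOn φ (Iic 0)) (hφm : MonotoneOn φ (Iic 0))
    (hφ0 : ∀ s ≤ (0:ℝ), 0 ≤ φ s) (hφbelow : ∀ s ≤ T, φ s = 0) (hT : T < 0)
    (K : Set ℝ) (hK : MeasurableSet K) (c d : ℝ) (hcd : c ≤ d)
    (hKc : K ⊆ Iic c) (hKd : K ⊆ Iio d) (b : ℝ) (hKb : K ⊆ Iic b) :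
    volume (({p : ℝ × ℝ | p.1 ∈ K} ∩ trawlSetAt φ c) \ trawlSetAt φ d)
      = ENNReal.ofReal (∫ t in K, (psi φ (t - c) - psi φ (t - d))) := by
  have hint : IntegrableOn (fun t => psi φ (t - c) - psi φ (t - d)) (Iic b) :=
    (psi_int_shift hφc hφbelow hT c b).sub (psi_int_shift hφc hφbelow hT d b)
  rw [vol_core hφc hφm hφ0 K hK c d hcd hKc hKd,
    ← ofReal_integral_eq_lintegral_ofReal (hint.mono_set hKb)
      (Eventually.of_forall fun t => sub_nonneg.2 (psi_mono hφm (by linarith)))]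

end Helpers

/-- Lebesgue measures of the slices of a bounded monotonic trawl set with
`φ(T) = 0`, `I = ⌈−T/τ⌉`: `s_{i1} = ∫_{−iτ}^{(−i+1)τ} φ`, `s_{i2} = s_{i1} − s_{i+1,1}`
(with `s_{I+1,1} = 0`), and `s_{ij} = s_{ij'}` for all `j, j' ≥ 2`. -/


theorem slice_partition_areas
    (φ : ℝ → ℝ) (hφc : ContinuousOn φ (Iic 0)) (hφm : MonotoneOn φ (Iic 0))
    (hφ0 : ∀ s ≤ (0 : ℝ), 0 ≤ φ s)
    (T : ℝ) (hT : T < 0) (hφT : φ T = 0) (hφbelow : ∀ s ≤ T, φ s = 0)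
    (τ : ℝ) (hτ : 0 < τ)
    (I : ℕ) (hI : I = ⌈(-T) / τ⌉₊) :
    (∀ i : ℕ, 1 ≤ i →
      volume (sliceSet φ τ i 1) =
        ENNReal.ofReal (∫ t in Ioc (-(i : ℝ) * τ) ((-(i : ℝ) + 1) * τ), φ t)) ∧
    (∀ i : ℕ, 1 ≤ i → i ≤ I →
      (volume (sliceSet φ τ i 2)).toReal =
        (volume (sliceSet φ τ i 1)).toReal - (volume (sliceSet φ τ (i + 1) 1)).toReal) ∧
    (∀ i j j' : ℕ, 1 ≤ i → 2 ≤ j → 2 ≤ j' →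
      volume (sliceSet φ τ i j) = volume (sliceSet φ τ i j')) := by
  set F : ℝ → ℝ := fun u => ∫ t in Iic u, psi φ t with hF
  -- difference of F values is an Ioc integral
  have hIic : ∀ u v : ℝ, u ≤ v → F v - F u = ∫ t in Ioc u v, psi φ t := by
    intro u v huv
    have h := setIntegral_union (Iic_disjoint_Ioc le_rfl) measurableSet_Ioc
      (psi_int hφc hφbelow hT u)
      ((psi_int hφc hφbelow hT v).mono_set Ioc_subset_Iic_self)
    rw [Iic_union_Ioc_eq_Iic huv] at h
    simp only [hF]
    linarith [h]
  have hFnonneg : ∀ u v : ℝ, u ≤ v → 0 ≤ F v - F u := by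
    intro u v huv
    rw [hIic u v huv]
    exact setIntegral_nonneg measurableSet_Ioc fun t _ => psi_nonneg hφ0 t
  -- first slice volume
  have slice1 : ∀ i : ℕ, 1 ≤ i →
      volume (sliceSet φ τ i 1)
        = ENNReal.ofReal (F ((-(i : ℝ) + 1) * τ) - F (-(i : ℝ) * τ)) := by
    intro i hi
    have hi1 : (1 : ℝ) ≤ (i : ℝ) := by exact_mod_cast hi
    have hset : sliceSet φ τ i 1
        = ({p : ℝ × ℝ | p.1 ∈ Iic τ} ∩ trawlSetAt φ ((i : ℝ) * τ))
            \ trawlSetAt φ (((i : ℝ) + 1) * τ) := by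
      unfold sliceSet
      rw [if_pos rfl]
      ext p
      simp only [mem_inter_iff, mem_diff, mem_setOf_eq, mem_Iic]
      tauto
    rw [hset, vol_core' hφc hφm hφ0 hφbelow hT (Iic τ) measurableSet_Iic
      ((i : ℝ) * τ) (((i : ℝ) + 1) * τ) (by nlinarith)
      (Iic_subset_Iic.2 (by nlinarith))
      (fun t ht => lt_of_le_of_lt (mem_Iic.1 ht) (by nlinarith)) τ subset_rfl]
    rw [integral_sub (psi_int_shift hφc hφbelow hT _ τ) (psi_int_shift hφc hφbelow hT _ τ),
      psi_shift_integral, psi_shift_integral]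
    have e1 : τ - (i : ℝ) * τ = (-(i : ℝ) + 1) * τ := by ring
    have e2 : τ - ((i : ℝ) + 1) * τ = -(i : ℝ) * τ := by ring
    rw [e1, e2]
  -- later slice volumes
  have slicej : ∀ i j : ℕ, 1 ≤ i → 2 ≤ j →
      volume (sliceSet φ τ i j)
        = ENNReal.ofReal ((F ((-(i : ℝ) + 1) * τ) - F (-(i : ℝ) * τ))
            - (F (-(i : ℝ) * τ) - F (-((i : ℝ) + 1) * τ))) := by
    intro i j hi hj
    have hi1 : (1 : ℝ) ≤ (i : ℝ) := by exact_mod_cast hi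
    have hj2 : (2 : ℝ) ≤ (j : ℝ) := by exact_mod_cast hj
    have hj1 : j ≠ 1 := by omega
    set c : ℝ := ((i : ℝ) + (j : ℝ) - 1) * τ with hc
    set d : ℝ := ((i : ℝ) + (j : ℝ)) * τ with hd
    have hset : sliceSet φ τ i j
        = ({p : ℝ × ℝ | p.1 ∈ Ioc (((j : ℝ) - 1) * τ) ((j : ℝ) * τ)} ∩ trawlSetAt φ c)
            \ trawlSetAt φ d := by
      unfold sliceSet
      rw [if_neg hj1]
      rfl
    rw [hset, vol_core' hφc hφm hφ0 hφbelow hT _ measurableSet_Ioc c d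
      (by rw [hc, hd]; nlinarith)
      (fun t ht => le_trans (mem_Ioc.1 ht).2 (by rw [hc]; nlinarith))
      (fun t ht => lt_of_le_of_lt (mem_Ioc.1 ht).2 (by rw [hd]; nlinarith))
      ((j : ℝ) * τ) Ioc_subset_Iic_self]
    rw [integral_sub
      ((psi_int_shift hφc hφbelow hT c ((j : ℝ) * τ)).mono_set Ioc_subset_Iic_self)
      ((psi_int_shift hφc hφbelow hT d ((j : ℝ) * τ)).mono_set Ioc_subset_Iic_self),
      psi_shift_integral_Ioc, psi_shift_integral_Ioc]
    have e1 : ((j : ℝ) - 1) * τ - c = -(i : ℝ) * τ := by rw [hc]; ring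
    have e2 : (j : ℝ) * τ - c = (-(i : ℝ) + 1) * τ := by rw [hc]; ring
    have e3 : ((j : ℝ) - 1) * τ - d = -((i : ℝ) + 1) * τ := by rw [hd]; ring
    have e4 : (j : ℝ) * τ - d = -(i : ℝ) * τ := by rw [hd]; ring
    rw [e1, e2, e3, e4,
      ← hIic _ _ (by nlinarith : -(i:ℝ)*τ ≤ (-(i:ℝ)+1)*τ),
      ← hIic _ _ (by nlinarith : -((i:ℝ)+1)*τ ≤ -(i:ℝ)*τ)]
  -- monotonicity of consecutive first-slice areas
  have hmono : ∀ i : ℕ, 1 ≤ i →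
      F (-(i : ℝ) * τ) - F (-((i : ℝ) + 1) * τ)
        ≤ F ((-(i : ℝ) + 1) * τ) - F (-(i : ℝ) * τ) := by
    intro i hi
    have hi1 : (1 : ℝ) ≤ (i : ℝ) := by exact_mod_cast hi
    rw [hIic _ _ (by nlinarith : -((i:ℝ)+1)*τ ≤ -(i:ℝ)*τ),
      hIic _ _ (by nlinarith : -(i:ℝ)*τ ≤ (-(i:ℝ)+1)*τ)]
    have hsh := psi_shift_integral_Ioc (φ := φ) τ (-(i : ℝ) * τ) ((-(i : ℝ) + 1) * τ)
    have e1 : -(i : ℝ) * τ - τ = -((i : ℝ) + 1) * τ := by ring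
    have e2 : (-(i : ℝ) + 1) * τ - τ = -(i : ℝ) * τ := by ring
    rw [e1, e2] at hsh
    rw [← hsh]
    apply setIntegral_mono_on
      ((psi_int_shift hφc hφbelow hT τ ((-(i : ℝ) + 1) * τ)).mono_set Ioc_subset_Iic_self)
      ((psi_int hφc hφbelow hT ((-(i : ℝ) + 1) * τ)).mono_set Ioc_subset_Iic_self)
      measurableSet_Ioc
    intro t _
    exact psi_mono hφm (by linarith)
  refine ⟨?_, ?_, ?_⟩
  · intro i hi
    have hi1 : (1 : ℝ) ≤ (i : ℝ) := by exact_mod_cast hi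
    rw [slice1 i hi, hIic _ _ (by nlinarith : -(i:ℝ)*τ ≤ (-(i:ℝ)+1)*τ)]
    congr 1
    apply setIntegral_congr_fun measurableSet_Ioc
    intro t ht
    exact psi_eq φ (le_trans ht.2 (by nlinarith))
  · intro i hi _
    have hi1 : (1 : ℝ) ≤ (i : ℝ) := by exact_mod_cast hi
    have hcast1 : (-(((i:ℕ) + 1 : ℕ) : ℝ) + 1) * τ = -(i : ℝ) * τ := by push_cast; ring
    have hcast2 : -(((i:ℕ) + 1 : ℕ) : ℝ) * τ = -((i : ℝ) + 1) * τ := by push_cast; ring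
    rw [slicej i 2 hi le_rfl, slice1 i hi, slice1 (i + 1) (by omega), hcast1, hcast2]
    rw [ENNReal.toReal_ofReal (by linarith [hmono i hi]),
      ENNReal.toReal_ofReal (hFnonneg _ _ (by nlinarith)),
      ENNReal.toReal_ofReal (hFnonneg _ _ (by nlinarith))]
  · intro i j j' hi hj hj'
    rw [slicej i j hi hj, slicej i j' hi hj']
end
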